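/- Let K ⊆ ℝ^d be a nonempty compact set, star-convex with respect to the origin, and set U := ℝ^d \ K. Let 0 < F₁ ≤ F₀ and Q' > 0. Let u₀ : closure(U) → [0,∞) be continuous and compactly supported with u₀ = F₀ on ∂U, u₀ ≤ F₀ on closure(U), and assume that for every η ≥ 0 the superlevel set {u₀ > η} ∪ K is star-convex with respect to the origin. Let T be the set of all continuous v : closure(U) → [0,∞) such that v ≤ F₁ on ∂U, v ≤ u₀ on closure(U), and v is a viscosity subsolution of the one-phase stability condition with slope bound Q' on U. Assume that the pointwise supremum w(x) := sup{v(x) : v ∈ T} itself belongs to T and satisfies w ≤ F₁ on closure(U). Then for every λ > 1 and every x ∈ closure(U), one has w(λx) ≤ w(x) (note λx ∈ closure(U) automatically); in particular, for every η ≥ 0 the set {w > η} ∪ K is star-convex with respect to the origin. -/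

import Mathlib

open Set Metric Filter
open scoped RealInnerProductSpace Topology Pointwise

noncomputable section

abbrev Rd (d : ℕ) : Type := EuclideanSpace ℝ (Fin d)

/-- Laplacian as the trace of the Hessian (sum of pure second derivatives). -/
def lap {d : ℕ} (φ : Rd d → ℝ) (x : Rd d) : ℝ :=
  ∑ i : Fin d, fderiv ℝ (fun y => fderiv ℝ φ y (EuclideanSpace.single i (1:ℝ))) x
      (EuclideanSpace.single i (1:ℝ))

/-- viscosity subharmonic on a set -/
def ViscSubharmonicOn {d : ℕ} (f : Rd d → ℝ) (V : Set (Rd d)) : Prop :=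
  ∀ φ : Rd d → ℝ, ∀ x₀ ∈ V, ContDiffAt ℝ 2 φ x₀ →
    IsLocalMax (fun x => f x - φ x) x₀ → 0 ≤ lap φ x₀

/-- viscosity superharmonic on a set -/
def ViscSuperharmonicOn {d : ℕ} (f : Rd d → ℝ) (V : Set (Rd d)) : Prop :=
  ∀ φ : Rd d → ℝ, ∀ x₀ ∈ V, ContDiffAt ℝ 2 φ x₀ →
    IsLocalMin (fun x => f x - φ x) x₀ → lap φ x₀ ≤ 0

/-- positivity set -/
def PosSet {d : ℕ} (f : Rd d → ℝ) : Set (Rd d) := {x | 0 < f x}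

/-- superdifferential within the closure of the positivity set -/
def Dplus {d : ℕ} (f : Rd d → ℝ) (x₀ : Rd d) : Set (Rd d) :=
  {p | ∀ ε > (0:ℝ), ∃ δ > (0:ℝ), ∀ x ∈ closure (PosSet f),
      ‖x - x₀‖ < δ → f x ≤ ⟪p, x - x₀⟫ + ε * ‖x - x₀‖}

/-- subdifferential -/
def Dminus {d : ℕ} (f : Rd d → ℝ) (x₀ : Rd d) : Set (Rd d) :=
  {p | ∀ ε > (0:ℝ), ∃ δ > (0:ℝ), ∀ x : Rd d,
      ‖x - x₀‖ < δ → ⟪p, x - x₀⟫ - ε * ‖x - x₀‖ ≤ f x}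

/-- viscosity supersolution of the one-phase stability condition with slope bound Q -/
def IsSupersolStab {d : ℕ} (v : Rd d → ℝ) (U : Set (Rd d)) (Q : ℝ) : Prop :=
  ViscSuperharmonicOn v (PosSet v ∩ U) ∧
  ∀ x₀ ∈ frontier (PosSet v) ∩ U, ∀ p ∈ Dminus v x₀, ‖p‖ ^ 2 ≤ Q

/-- viscosity subsolution of the one-phase stability condition with slope bound Q -/
def IsSubsolStab {d : ℕ} (v : Rd d → ℝ) (U : Set (Rd d)) (Q : ℝ) : Prop :=
  ViscSubharmonicOn v (PosSet v ∩ U) ∧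
  ∀ x₀ ∈ frontier (PosSet v) ∩ U, ∀ p ∈ Dplus v x₀, Q ≤ ‖p‖ ^ 2

lemma lap_comp_smul {d : ℕ} (φ : Rd d → ℝ) (c : ℝ) (x₀ : Rd d)
    (hφ : ContDiffAt ℝ 2 φ (c • x₀)) :
    lap (fun y => φ (c • y)) x₀ = c ^ 2 * lap φ (c • x₀) := by
  classical
  set L : Rd d →L[ℝ] Rd d := c • ContinuousLinearMap.id ℝ (Rd d) with hL
  have hLy : ∀ y : Rd d, L y = c • y := fun y => rfl
  have htend : Tendsto (fun y : Rd d => c • y) (𝓝 x₀) (𝓝 (c • x₀)) :=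
    (continuous_const_smul c).continuousAt
  have hev2 : ∀ᶠ z in 𝓝 (c • x₀), ContDiffAt ℝ 2 φ z := hφ.eventually (by simp)
  have hdiff : ∀ᶠ z in 𝓝 (c • x₀), DifferentiableAt ℝ φ z :=
    hev2.mono fun z hz => hz.differentiableAt two_ne_zero
  have hdiff' : ∀ᶠ y in 𝓝 x₀, DifferentiableAt ℝ φ (c • y) := htend.eventually hdiff
  have stepA : ∀ᶠ y in 𝓝 x₀,
      fderiv ℝ (fun x => φ (c • x)) y = (fderiv ℝ φ (c • y)).comp L := by
    filter_upwards [hdiff'] with y hy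
    have : fderiv ℝ (φ ∘ L) y = (fderiv ℝ φ (L y)).comp (fderiv ℝ (⇑L) y) :=
      fderiv_comp y (by simpa [hLy] using hy) L.differentiableAt
    simpa [L.fderiv, hLy, Function.comp_def] using this
  set E : Fin d → Rd d := fun i => EuclideanSpace.single i (1:ℝ) with hE
  set F : Rd d → (Rd d →L[ℝ] ℝ) := fderiv ℝ φ with hF
  have hFd : DifferentiableAt ℝ F (c • x₀) :=
    (hφ.fderiv_right (m := 1) (by norm_num)).differentiableAt one_ne_zero
  have key : ∀ i : Fin d,
      fderiv ℝ (fun y => fderiv ℝ (fun x => φ (c • x)) y (E i)) x₀ (E i)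
        = c ^ 2 * fderiv ℝ (fun z => F z (E i)) (c • x₀) (E i) := by
    intro i
    set A : (Rd d →L[ℝ] ℝ) →L[ℝ] ℝ := ContinuousLinearMap.apply ℝ ℝ (E i) with hA
    have hgi : DifferentiableAt ℝ (fun z => F z (E i)) (c • x₀) :=
      A.differentiableAt.comp (c • x₀) hFd
    have e1 : (fun y => fderiv ℝ (fun x => φ (c • x)) y (E i))
        =ᶠ[𝓝 x₀] fun y => c * (F (c • y) (E i)) := by
      filter_upwards [stepA] with y hy
      rw [hy]
      simp [hLy, map_smul, smul_eq_mul, F]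
    rw [e1.fderiv_eq]
    have hcomp : fderiv ℝ (fun y => F (c • y) (E i)) x₀
        = (fderiv ℝ (fun z => F z (E i)) (c • x₀)).comp L := by
      have : fderiv ℝ ((fun z => F z (E i)) ∘ ⇑L) x₀
          = (fderiv ℝ (fun z => F z (E i)) (L x₀)).comp (fderiv ℝ (⇑L) x₀) :=
        fderiv_comp x₀ (by simpa [hLy] using hgi) L.differentiableAt
      simpa [L.fderiv, hLy, Function.comp_def] using this
    have hd2 : DifferentiableAt ℝ (fun y => F (c • y) (E i)) x₀ := by
      have := hgi.comp x₀ (L.differentiableAt (x := x₀))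
      simpa [hLy, Function.comp_def] using this
    rw [fderiv_const_mul hd2 c, hcomp]
    simp [hLy, map_smul, smul_eq_mul]
    ring
  unfold lap
  rw [Finset.mul_sum]
  exact Finset.sum_congr rfl fun i _ => key i

lemma subsol_smul {d : ℕ} (w : Rd d → ℝ) (U : Set (Rd d)) (Q : ℝ)
    (lam : ℝ) (hlam : 1 < lam) (hU : ∀ z ∈ U, lam • z ∈ U)
    (hsub : IsSubsolStab w U Q) :
    IsSubsolStab (fun y => w (lam • y)) U Q := by
  have hc0 : (0:ℝ) < lam := lt_trans one_pos hlam
  set cu : ℝˣ := Units.mk0 lam hc0.ne' with hcu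
  set h : Rd d ≃ₜ Rd d := Homeomorph.smul cu with hhdef
  have hh : ∀ y : Rd d, h y = lam • y := fun y => rfl
  have hpre : (⇑h) ⁻¹' (PosSet w) = PosSet (fun y => w (lam • y)) := by
    ext y; simp [PosSet, hh]
  constructor
  · intro φ x₀ hx₀ hφ hmax
    obtain ⟨hx₀p, hx₀U⟩ := hx₀
    have hpP : lam • x₀ ∈ PosSet w := hx₀p
    have hpU : lam • x₀ ∈ U := hU _ hx₀U
    have hφ' : ContDiffAt ℝ 2 φ (lam⁻¹ • (lam • x₀)) := by
      rw [smul_smul, inv_mul_cancel₀ hc0.ne', one_smul]; exact hφ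
    have hψc : ContDiffAt ℝ 2 (fun y => φ (lam⁻¹ • y)) (lam • x₀) :=
      ContDiffAt.comp _ hφ' ((contDiff_id.const_smul lam⁻¹).contDiffAt)
    have ht : Tendsto (fun y : Rd d => lam⁻¹ • y) (𝓝 (lam • x₀)) (𝓝 x₀) := by
      have := (continuous_const_smul lam⁻¹ : Continuous fun y : Rd d => lam⁻¹ • y).continuousAt (x := lam • x₀)
      simpa [ContinuousAt, smul_smul, inv_mul_cancel₀ hc0.ne'] using this
    have hmax' : IsLocalMax (fun y => w y - φ (lam⁻¹ • y)) (lam • x₀) := by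
      have hev := ht.eventually hmax
      filter_upwards [hev] with y hy
      have e1 : w (lam • lam⁻¹ • y) = w y := by
        rw [smul_smul, mul_inv_cancel₀ hc0.ne', one_smul]
      have e2 : φ (lam⁻¹ • lam • x₀) = φ x₀ := by
        rw [smul_smul, inv_mul_cancel₀ hc0.ne', one_smul]
      have e3 : w (lam • x₀) - φ (lam⁻¹ • (lam • x₀)) = w (lam • x₀) - φ x₀ := by rw [e2]
      calc w y - φ (lam⁻¹ • y) = w (lam • lam⁻¹ • y) - φ (lam⁻¹ • y) := by rw [e1]
        _ ≤ w (lam • x₀) - φ x₀ := hy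
        _ = w (lam • x₀) - φ (lam⁻¹ • (lam • x₀)) := by rw [e2]
    have h0 := hsub.1 (fun y => φ (lam⁻¹ • y)) (lam • x₀) ⟨hpP, hpU⟩ hψc hmax'
    have hlap := lap_comp_smul φ lam⁻¹ (lam • x₀) hφ'
    rw [smul_smul, inv_mul_cancel₀ hc0.ne', one_smul] at hlap
    rw [hlap] at h0
    have h2 : (0:ℝ) < (lam⁻¹) ^ 2 := by positivity
    by_contra hlt
    push_neg at hlt
    nlinarith
  · intro x₀ hx₀ p hp
    obtain ⟨hx₀f, hx₀U⟩ := hx₀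
    have hfr : lam • x₀ ∈ frontier (PosSet w) := by
      have hfp := h.preimage_frontier (PosSet w)
      rw [hpre] at hfp
      have : x₀ ∈ (⇑h) ⁻¹' frontier (PosSet w) := by rw [hfp]; exact hx₀f
      simpa [hh] using this
    have hq : lam⁻¹ • p ∈ Dplus w (lam • x₀) := by
      intro ε hε
      obtain ⟨δ, hδ, hδ'⟩ := hp (ε * lam) (by positivity)
      refine ⟨lam * δ, by positivity, ?_⟩
      intro y hy hnorm
      have hclp := h.preimage_closure (PosSet w)
      rw [hpre] at hclp
      have hxmem : lam⁻¹ • y ∈ closure (PosSet (fun y => w (lam • y))) := by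
        rw [← hclp]
        show h (lam⁻¹ • y) ∈ closure (PosSet w)
        have : h (lam⁻¹ • y) = y := by
          rw [hh, smul_smul, mul_inv_cancel₀ hc0.ne', one_smul]
        rw [this]; exact hy
      have hsub' : lam⁻¹ • y - x₀ = lam⁻¹ • (y - lam • x₀) := by
        rw [smul_sub, smul_smul, inv_mul_cancel₀ hc0.ne', one_smul]
      have hn : ‖lam⁻¹ • y - x₀‖ = lam⁻¹ * ‖y - lam • x₀‖ := by
        rw [hsub', norm_smul, Real.norm_eq_abs, abs_of_pos (by positivity)]
      have hdist : ‖lam⁻¹ • y - x₀‖ < δ := by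
        rw [hn]
        calc lam⁻¹ * ‖y - lam • x₀‖ < lam⁻¹ * (lam * δ) := by
              apply mul_lt_mul_of_pos_left hnorm (by positivity)
          _ = δ := by field_simp
      have hkey := hδ' (lam⁻¹ • y) hxmem hdist
      have e1 : w (lam • lam⁻¹ • y) = w y := by
        rw [smul_smul, mul_inv_cancel₀ hc0.ne', one_smul]
      have e2 : ⟪p, lam⁻¹ • y - x₀⟫ = ⟪lam⁻¹ • p, y - lam • x₀⟫ := by
        rw [hsub', real_inner_smul_right, real_inner_smul_left]
      calc w y ≤ ⟪p, lam⁻¹ • y - x₀⟫ + (ε * lam) * ‖lam⁻¹ • y - x₀‖ := by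
            rw [← e1]; exact hkey
        _ = ⟪lam⁻¹ • p, y - lam • x₀⟫ + ε * ‖y - lam • x₀‖ := by
            rw [e2, hn]; field_simp
    have hQ := hsub.2 (lam • x₀) ⟨hfr, hU _ hx₀U⟩ (lam⁻¹ • p) hq
    rw [norm_smul, Real.norm_eq_abs, abs_of_pos (by positivity : (0:ℝ) < lam⁻¹),
      mul_pow] at hQ
    have h1 : (lam⁻¹) ^ 2 * ‖p‖ ^ 2 ≤ ‖p‖ ^ 2 := by
      have : (lam⁻¹) ^ 2 ≤ 1 := by
        have : lam⁻¹ ≤ 1 := by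
          rw [inv_le_one_iff₀]; right; exact hlam.le
        nlinarith [inv_pos.2 hc0]
      nlinarith [sq_nonneg ‖p‖]
    linarith

theorem perron_sup_starshaped
    {d : ℕ} (K : Set (Rd d)) (hKne : K.Nonempty) (hKcomp : IsCompact K)
    (hKstar : StarConvex ℝ (0 : Rd d) K)
    (U : Set (Rd d)) (hUdef : U = Kᶜ)
    (F₀ F₁ Q' : ℝ) (hF₁ : 0 < F₁) (hF₁₀ : F₁ ≤ F₀) (hQ' : 0 < Q')
    (u₀ : Rd d → ℝ) (hu₀cont : ContinuousOn u₀ (closure U))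
    (hu₀supp : HasCompactSupport u₀)
    (hu₀nn : ∀ x ∈ closure U, 0 ≤ u₀ x)
    (hu₀bd : ∀ x ∈ frontier U, u₀ x = F₀) (hu₀le : ∀ x ∈ closure U, u₀ x ≤ F₀)
    (hu₀star : ∀ η : ℝ, 0 ≤ η →
      StarConvex ℝ (0 : Rd d) ({x ∈ closure U | η < u₀ x} ∪ K))
    (T : Set (Rd d → ℝ))
    (hT : T = {v : Rd d → ℝ | ContinuousOn v (closure U) ∧
      (∀ x ∈ closure U, 0 ≤ v x) ∧ (∀ x ∈ frontier U, v x ≤ F₁) ∧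
      (∀ x ∈ closure U, v x ≤ u₀ x) ∧ IsSubsolStab v U Q'})
    (w : Rd d → ℝ) (hwsup : ∀ x, w x = sSup ((fun v : Rd d → ℝ => v x) '' T))
    (hwT : w ∈ T) (hwle : ∀ x ∈ closure U, w x ≤ F₁) :
    (∀ lam : ℝ, 1 < lam → ∀ x ∈ closure U, w (lam • x) ≤ w x) ∧
    (∀ η : ℝ, 0 ≤ η → StarConvex ℝ (0 : Rd d) ({x ∈ closure U | η < w x} ∪ K)) := by
  subst hUdef
  rw [hT] at hwT
  obtain ⟨hwcont, hwnn, hwbd, hwu₀, hwsub⟩ := hwT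
  have part1 : ∀ lam : ℝ, 1 < lam → ∀ x ∈ closure (Kᶜ : Set (Rd d)), w (lam • x) ≤ w x := by
    intro lam hlam x hx
    have hc0 : (0:ℝ) < lam := lt_trans one_pos hlam
    have hinv1 : lam⁻¹ ≤ 1 := by
      rw [inv_le_one_iff₀]; right; exact hlam.le
    have hKc : ∀ z : Rd d, z ∈ (Kᶜ : Set (Rd d)) → lam • z ∈ (Kᶜ : Set (Rd d)) := by
      intro z hz hmem
      apply hz
      have := hKstar.smul_mem hmem (t := lam⁻¹) (by positivity) hinv1
      rwa [smul_smul, inv_mul_cancel₀ hc0.ne', one_smul] at this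
    have hKcl : ∀ z : Rd d, z ∈ closure (Kᶜ : Set (Rd d)) →
        lam • z ∈ closure (Kᶜ : Set (Rd d)) := by
      intro z hz
      have h1 : lam • z ∈ (fun y : Rd d => lam • y) '' closure (Kᶜ : Set (Rd d)) :=
        ⟨z, hz, rfl⟩
      have h2 := image_closure_subset_closure_image
        (f := fun y : Rd d => lam • y) (s := (Kᶜ : Set (Rd d)))
        (continuous_const_smul lam) h1
      refine closure_mono ?_ h2
      rintro _ ⟨a, ha, rfl⟩
      exact hKc a ha
    have hvT : (fun y => w (lam • y)) ∈ T := by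
      rw [hT]
      refine ⟨?_, ?_, ?_, ?_, ?_⟩
      · exact hwcont.comp ((continuous_const_smul lam).continuousOn)
          (fun z hz => hKcl z hz)
      · exact fun z hz => hwnn _ (hKcl z hz)
      · exact fun z hz => hwle _ (hKcl z (frontier_subset_closure hz))
      · intro z hz
        have h1 : w (lam • z) ≤ u₀ (lam • z) := hwu₀ _ (hKcl z hz)
        have h2 : u₀ (lam • z) ≤ u₀ z := by
          by_contra h2
          push_neg at h2
          have hη : 0 ≤ u₀ z := hu₀nn z hz
          have hmem : lam • z ∈ ({x ∈ closure (Kᶜ : Set (Rd d)) | u₀ z < u₀ x} ∪ K) :=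
            Or.inl ⟨hKcl z hz, h2⟩
          have hx2 := (hu₀star _ hη).smul_mem hmem (t := lam⁻¹) (by positivity) hinv1
          rw [smul_smul, inv_mul_cancel₀ hc0.ne', one_smul] at hx2
          rcases hx2 with ⟨_, hlt⟩ | hK2
          · exact lt_irrefl _ hlt
          · have hfz : z ∈ frontier (Kᶜ : Set (Rd d)) :=
               ⟨hz, fun hint => interior_subset hint hK2⟩
            have hb := hu₀bd z hfz
            have hle := hu₀le _ (hKcl z hz)
            rw [hb] at h2
            linarith
        exact h1.trans h2
      · exact subsol_smul w (Kᶜ : Set (Rd d)) Q' lam hlam hKc hwsub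
    have hbdd : BddAbove ((fun v : Rd d → ℝ => v x) '' T) := by
      refine ⟨u₀ x, ?_⟩
      rintro r ⟨v, hv, rfl⟩
      rw [hT] at hv
      exact hv.2.2.2.1 x hx
    have hle := le_csSup hbdd ⟨(fun y => w (lam • y)), hvT, rfl⟩
    rw [← hwsup x] at hle
    exact hle
  refine ⟨part1, ?_⟩
  intro η hη y hy a b ha hb hab
  rw [smul_zero, zero_add]
  rcases hy with ⟨hycl, hyw⟩ | hyK
  · by_cases hbK : b • y ∈ K
    · exact Or.inr hbK
    · rcases eq_or_lt_of_le hb with hb0 | hbpos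
      · exfalso
        apply hbK
        rw [← hb0, zero_smul]
        obtain ⟨k, hk⟩ := hKne
        have := hKstar.smul_mem hk (t := 0) le_rfl zero_le_one
        rwa [zero_smul] at this
      · by_cases hb1 : b = 1
        · rw [hb1, one_smul]; exact Or.inl ⟨hycl, hyw⟩
        · have hblt : b < 1 := lt_of_le_of_ne (by linarith) hb1
          have hlam : 1 < b⁻¹ := (one_lt_inv₀ hbpos).2 hblt
          have hcl : b • y ∈ closure (Kᶜ : Set (Rd d)) := subset_closure hbK
          have hp := part1 b⁻¹ hlam (b • y) hcl
          rw [smul_smul, inv_mul_cancel₀ hbpos.ne', one_smul] at hp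
          exact Or.inl ⟨hcl, lt_of_lt_of_le hyw hp⟩
  · exact Or.inr (hKstar.smul_mem hyK hb (by linarith))
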